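/- arXiv:1901.08763 — 4 statements merged into one kernel-verified Lean document; each statement's English description precedes it below -/
import Mathlib

section
/- Let K be a positive integer and let θ[0], θ[1], …, θ[K−1] be arbitrary real numbers. Define the normalized DFT coefficients Ω[k] = (1/K)·∑_{n=0}^{K−1} exp(−i·θ[n])·exp(−2πi·k·n/K) for every integer k (so that Ω is K-periodic in k). Then for every integer k₁, the circular autocorrelation over one full period satisfies ∑_{k=0}^{K−1} Ω[k]·conj(Ω[k+k₁]) = 1 if K divides k₁, and = 0 otherwise. -/
/-!
Expanding both DFTs, the sum over `k` of the kernel `exp(2πi(m - n)k/K)` vanishes unless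
`m = n` (orthogonality of the characters of `ℤ/K`), so the circular autocorrelation of the DFT
of `a` is `K` times the DFT of `|a|²` at `-k₁`. For a unit-modulus sequence this is
`K · ∑ₙ exp(2πi k₁ n/K)`, a sum of powers of a `K`-th root of unity, equal to `K²` or `0`
according as `K ∣ k₁`.
-/

open Finset Complex Real

/-- The normalized DFT (nDFT) coefficients of the unit-modulus sequence
`exp(−i·θ[n])`, defined for every integer `k`. -/
noncomputable def nDFT (K : ℕ) (θ : ℕ → ℝ) (k : ℤ) : ℂ :=
  (1 / (K : ℂ)) * ∑ n ∈ Finset.range K,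
    Complex.exp (-Complex.I * (θ n : ℂ)) *
      Complex.exp (-2 * (Real.pi : ℂ) * Complex.I * (k : ℂ) * (n : ℂ) / (K : ℂ))

open ComplexConjugate

lemma IsPrimitiveRoot.sum_range_zpow_pow {F : Type*} [Field F] {ζ : F} {K : ℕ}
    (hζ : IsPrimitiveRoot ζ K) (d : ℤ) :
    ∑ n ∈ range K, (ζ ^ d) ^ n = if (K : ℤ) ∣ d then (K : F) else 0 := by
  split_ifs with hd
  · simp [(hζ.zpow_eq_one_iff_dvd d).mpr hd]
  · have hζd : ζ ^ d ≠ 1 := mt (hζ.zpow_eq_one_iff_dvd d).mp hd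
    rw [geom_sum_eq hζd, ← zpow_natCast, ← zpow_mul, mul_comm, zpow_mul, zpow_natCast,
      hζ.pow_eq_one, one_zpow, sub_self, zero_div]

lemma sum_range_exp_two_pi_I_mul_div {K : ℕ} (hK : 0 < K) (d : ℤ) :
    ∑ n ∈ range K, cexp (2 * π * I * d * n / K) = if (K : ℤ) ∣ d then (K : ℂ) else 0 := by
  rw [← (isPrimitiveRoot_exp K hK.ne').sum_range_zpow_pow d]
  refine sum_congr rfl fun n _ => ?_
  rw [← Complex.exp_int_mul, ← Complex.exp_nat_mul]
  ring_nf

lemma natCast_dvd_natCast_sub_natCast_iff {K m n : ℕ} (hm : m < K) (hn : n < K) :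
    (K : ℤ) ∣ ((m : ℤ) - n) ↔ m = n := by
  refine ⟨fun h => ?_, by rintro rfl; simp⟩
  have := Int.eq_zero_of_abs_lt_dvd h (by rw [abs_sub_lt_iff]; omega)
  omega

lemma sum_range_exp_two_pi_I_sub_mul_div {K m n : ℕ} (hm : m < K) (hn : n < K) :
    ∑ k ∈ range K, cexp (2 * π * I * ((m : ℤ) - n : ℤ) * k / K) =
      if m = n then (K : ℂ) else 0 := by
  simp only [sum_range_exp_two_pi_I_mul_div (by omega : 0 < K),
    natCast_dvd_natCast_sub_natCast_iff hm hn]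

noncomputable def dft (K : ℕ) (a : ℕ → ℂ) (k : ℤ) : ℂ :=
  ∑ n ∈ range K, a n * cexp (-2 * π * I * k * n / K)

lemma dft_mul_conj_dft_add (K : ℕ) (a : ℕ → ℂ) (k : ℕ) (k₁ : ℤ) :
    dft K a k * conj (dft K a (k + k₁)) =
      ∑ n ∈ range K, ∑ m ∈ range K, a n * conj (a m) * cexp (2 * π * I * k₁ * m / K) *
        cexp (2 * π * I * ((m : ℤ) - n : ℤ) * k / K) := by
  rw [dft, dft, map_sum, sum_mul_sum]
  refine sum_congr rfl fun n _ => sum_congr rfl fun m _ => ?_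
  simp only [map_mul, ← Complex.exp_conj, map_div₀, map_neg, map_ofNat, conj_I, conj_ofReal,
    map_intCast, map_natCast]
  rw [mul_mul_mul_comm, ← Complex.exp_add, mul_assoc _ (cexp _), ← Complex.exp_add]
  congr 2
  push_cast
  ring

theorem sum_dft_mul_conj_dft_add (K : ℕ) (a : ℕ → ℂ) (k₁ : ℤ) :
    ∑ k ∈ range K, dft K a k * conj (dft K a (k + k₁)) =
      K * ∑ n ∈ range K, a n * conj (a n) * cexp (2 * π * I * k₁ * n / K) := by
  simp only [dft_mul_conj_dft_add]
  rw [sum_comm, mul_sum]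
  refine sum_congr rfl fun n hn => ?_
  have hn : n < K := mem_range.mp hn
  rw [sum_comm]
  simp only [← mul_sum]
  rw [sum_congr rfl fun m hm => by rw [sum_range_exp_two_pi_I_sub_mul_div (mem_range.mp hm) hn]]
  simp only [mul_ite, mul_zero, sum_ite_eq', mem_range, if_pos hn]
  ring

lemma nDFT_eq_inv_mul_dft (K : ℕ) (θ : ℕ → ℝ) (k : ℤ) :
    nDFT K θ k = (K : ℂ)⁻¹ * dft K (fun n => cexp (-I * θ n)) k := by
  rw [nDFT, dft, one_div]

theorem circular_autocorrelation_of_nDFT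
    (K : ℕ) (hK : 0 < K) (θ : ℕ → ℝ) (k₁ : ℤ) :
    ∑ k ∈ Finset.range K,
        nDFT K θ (k : ℤ) * (starRingEnd ℂ) (nDFT K θ ((k : ℤ) + k₁)) =
      if (K : ℤ) ∣ k₁ then 1 else 0 := by
  have hunit (n : ℕ) : cexp (-I * θ n) * conj (cexp (-I * θ n)) = 1 := by
    rw [← Complex.exp_conj, ← Complex.exp_add]
    simp
  calc ∑ k ∈ range K, nDFT K θ k * conj (nDFT K θ (k + k₁))
      = (K : ℂ)⁻¹ ^ 2 * ∑ k ∈ range K, dft K (fun n => cexp (-I * θ n)) k *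
          conj (dft K (fun n => cexp (-I * θ n)) (k + k₁)) := by
        rw [mul_sum]
        refine sum_congr rfl fun k _ => ?_
        rw [nDFT_eq_inv_mul_dft, nDFT_eq_inv_mul_dft, map_mul, map_inv₀, map_natCast]
        ring
    _ = (K : ℂ)⁻¹ * ∑ n ∈ range K, cexp (2 * π * I * k₁ * n / K) := by
        rw [sum_dft_mul_conj_dft_add]
        simp only [hunit, one_mul]
        field_simp
    _ = if (K : ℤ) ∣ k₁ then 1 else 0 := by
        rw [sum_range_exp_two_pi_I_mul_div hK]
        split_ifs
        · exact inv_mul_cancel₀ (by exact_mod_cast hK.ne')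
        · exact mul_zero _
end

section
/- Let K be a positive integer, let θ[0], …, θ[K−1] be real numbers, and let Ω[k] = (1/K)·∑_{n=0}^{K−1} exp(−i·θ[n])·exp(−2πi·k·n/K). Let Ĝ be a finite set of integers whose elements are pairwise distinct modulo K, and set P = ∑_{k̇∈Ĝ} |Ω[k̇]|². Then for every integer k, ∑_{k̄ ∈ {0,…,K−1}, k̄ ≢ k (mod K)} | ∑_{k̇∈Ĝ} conj(Ω[k̇])·Ω[k̇+k−k̄] |² = P − P². -/
/-!
Write `Ω = nDFT K θ` and `S k̄ = ∑_{k̇ ∈ Ĝ} conj (Ω k̇) · Ω (k̇ + k - k̄)`. Because the sequence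
`exp (-i θ n)` has unit modulus, Parseval over one period gives the shift-orthonormality
`∑_{d mod K} Ω (a - d) · conj (Ω (b - d)) = [K ∣ a - b]`. Expanding `|S k̄|²` and summing over a full
period, only the diagonal pairs of `Ĝ` survive, so `∑_{k̄ mod K} |S k̄|² = P`. The one omitted
residue `k̄ ≡ k` has `S k̄ = P` by periodicity, and contributes `P²`.
-/

open Finset Complex Real

open scoped ComplexConjugate

theorem sum_range_exp_two_pi_I_mul_div_eq_ite {K : ℕ} (hK : 0 < K) (c : ℤ) :
    ∑ n ∈ range K, exp (2 * π * I * c * n / K) = if (K : ℤ) ∣ c then (K : ℂ) else 0 := by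
  have hζ := (isPrimitiveRoot_exp K hK.ne').zpow_eq_one_iff_dvd
  set ζ := exp (2 * π * I / K)
  have hpow (n : ℕ) : exp (2 * π * I * c * n / K) = (ζ ^ c) ^ n := by
    rw [← zpow_natCast, ← zpow_mul, ← exp_int_mul]
    push_cast
    ring_nf
  simp only [hpow]
  split_ifs with hc
  · simp [(hζ c).2 hc]
  · have hζK : (ζ ^ c) ^ K = 1 := by
      rw [← zpow_natCast, ← zpow_mul, hζ]
      exact dvd_mul_left _ _
    rw [geom_sum_eq (mt (hζ c).1 hc), hζK, sub_self, zero_div]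

theorem natCast_dvd_sub_iff_eq_of_lt {K m n : ℕ} (hm : m < K) (hn : n < K) :
    (K : ℤ) ∣ (m : ℤ) - n ↔ m = n :=
  ⟨fun h => ((Nat.modEq_iff_dvd.2 h).eq_of_lt_of_lt hn hm).symm, fun h => by simp [h]⟩

theorem Int.dvd_toNat_emod_sub {K : ℕ} (hK : 0 < K) (k : ℤ) : (K : ℤ) ∣ (k % K).toNat - k := by
  rw [Int.toNat_of_nonneg (Int.emod_nonneg k (by omega)), dvd_sub_comm]
  exact (Int.mod_modEq k K).dvd

theorem filter_range_dvd_sub_eq_singleton {K : ℕ} (hK : 0 < K) (k : ℤ) :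
    (range K).filter (fun n : ℕ => (K : ℤ) ∣ n - k) = {(k % K).toNat} := by
  have hrK : k % K < K := Int.emod_lt_of_pos k (by omega)
  have hrk := Int.dvd_toNat_emod_sub hK k
  ext n
  simp only [mem_filter, mem_range, mem_singleton]
  constructor
  · rintro ⟨hn, hdvd⟩
    rw [← natCast_dvd_sub_iff_eq_of_lt hn (by omega)]
    simpa using dvd_sub hdvd hrk
  · rintro rfl
    exact ⟨by omega, hrk⟩

noncomputable def normalizedDFT (K : ℕ) (x : ℕ → ℂ) (k : ℤ) : ℂ :=
  (1 / (K : ℂ)) * ∑ n ∈ range K, x n * exp (-2 * π * I * k * n / K)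

section normalizedDFT

variable {K : ℕ} (x : ℕ → ℂ)

theorem normalizedDFT_eq_of_dvd_sub {a b : ℤ} (h : (K : ℤ) ∣ a - b) :
    normalizedDFT K x a = normalizedDFT K x b := by
  rcases eq_or_ne K 0 with rfl | hK
  · simp [normalizedDFT]
  obtain ⟨t, ht⟩ := h
  unfold normalizedDFT
  congr 1
  refine sum_congr rfl fun n _ => ?_
  have ha : (a : ℂ) = b + K * t := by exact_mod_cast (by omega : a = b + K * t)
  rw [ha, show -2 * π * I * (b + K * t) * n / K
      = -2 * π * I * b * n / K + (-(t * n) : ℤ) * (2 * π * I) by push_cast; field_simp; ring,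
    Complex.exp_add, exp_int_mul_two_pi_mul_I, mul_one]

theorem conj_normalizedDFT (c : ℤ) : conj (normalizedDFT K x c) =
    (1 / (K : ℂ)) * ∑ m ∈ range K, conj (x m) * exp (2 * π * I * c * m / K) := by
  simp only [normalizedDFT, map_mul, map_sum, map_div₀, map_one, map_natCast, ← exp_conj]
  congr 3 with m
  simp only [map_neg, map_ofNat, conj_ofReal, conj_I, map_intCast]
  congr 2
  ring

theorem sum_range_normalizedDFT_sub_mul_conj_sub (hK : 0 < K) (a b : ℤ) :
    ∑ d ∈ range K, normalizedDFT K x (a - d) * conj (normalizedDFT K x (b - d)) =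
      (1 / (K : ℂ)) * ∑ n ∈ range K, ‖x n‖ ^ 2 * exp (2 * π * I * (b - a : ℤ) * n / K) := by
  set w : ℕ → ℕ → ℂ := fun n m => x n * conj (x m) * exp (2 * π * I * (b * m - a * n) / K)
  have hterm (d : ℕ) : normalizedDFT K x (a - d) * conj (normalizedDFT K x (b - d)) =
      (1 / (K : ℂ)) ^ 2 * ∑ n ∈ range K, ∑ m ∈ range K,
        w n m * exp (2 * π * I * (n - m : ℤ) * d / K) := by
    rw [normalizedDFT, conj_normalizedDFT, mul_mul_mul_comm, ← sq, sum_mul_sum]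
    congr 1
    refine sum_congr rfl fun n _ => sum_congr rfl fun m _ => ?_
    rw [mul_mul_mul_comm, ← Complex.exp_add, mul_assoc _ (cexp _), ← Complex.exp_add]
    congr 2
    push_cast
    ring
  have hdiag (n : ℕ) (hn : n < K) :
      ∑ d ∈ range K, ∑ m ∈ range K, w n m * exp (2 * π * I * (n - m : ℤ) * d / K) =
        K * (‖x n‖ ^ 2 * exp (2 * π * I * (b - a : ℤ) * n / K)) := by
    rw [sum_comm]
    simp_rw [← mul_sum]
    have horth (m : ℕ) (hm : m ∈ range K) :
        ∑ d ∈ range K, exp (2 * π * I * (n - m : ℤ) * d / K) = if n = m then (K : ℂ) else 0 := by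
      simp only [sum_range_exp_two_pi_I_mul_div_eq_ite hK,
        natCast_dvd_sub_iff_eq_of_lt hn (mem_range.1 hm)]
    rw [sum_congr rfl fun m hm => by rw [horth m hm]]
    simp only [mul_ite, mul_zero, sum_ite_eq, mem_range, hn, if_true, w, mul_conj']
    push_cast
    ring_nf
  simp only [hterm, ← mul_sum]
  rw [sum_comm, sum_congr rfl fun n hn => hdiag n (mem_range.1 hn), ← mul_sum]
  have : (K : ℂ) ≠ 0 := by exact_mod_cast hK.ne'
  field_simp

theorem sum_range_normalizedDFT_sub_mul_conj_sub_of_norm_eq_one (hK : 0 < K)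
    (hx : ∀ n, ‖x n‖ = 1) (a b : ℤ) :
    ∑ d ∈ range K, normalizedDFT K x (a - d) * conj (normalizedDFT K x (b - d)) =
      if (K : ℤ) ∣ a - b then 1 else 0 := by
  have : (K : ℂ) ≠ 0 := by exact_mod_cast hK.ne'
  simp only [sum_range_normalizedDFT_sub_mul_conj_sub x hK, hx, ofReal_one, one_pow, one_mul,
    sum_range_exp_two_pi_I_mul_div_eq_ite hK, dvd_sub_comm (b := b)]
  split_ifs
  · field_simp
  · rw [mul_zero]

end normalizedDFT

noncomputable def matchedFilter (Ω : ℤ → ℂ) (G : Finset ℤ) (k kbar : ℤ) : ℂ :=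
  ∑ kdot ∈ G, conj (Ω kdot) * Ω (kdot + k - kbar)

section matchedFilter

variable {K : ℕ} {Ω : ℤ → ℂ} {G : Finset ℤ}

theorem matchedFilter_eq_of_dvd_sub (hper : ∀ a b : ℤ, (K : ℤ) ∣ a - b → Ω a = Ω b)
    {k kbar : ℤ} (h : (K : ℤ) ∣ kbar - k) :
    matchedFilter Ω G k kbar = ((∑ kdot ∈ G, ‖Ω kdot‖ ^ 2 : ℝ) : ℂ) := by
  push_cast
  refine sum_congr rfl fun kdot _ => ?_
  rw [hper (kdot + k - kbar) kdot (by rwa [add_sub_assoc, add_sub_cancel_left, dvd_sub_comm]),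
    mul_comm, mul_conj']

theorem sum_range_norm_sq_matchedFilter
    (horth : ∀ a b : ℤ, ∑ d ∈ range K, Ω (a - d) * conj (Ω (b - d)) =
      if (K : ℤ) ∣ a - b then 1 else 0)
    (hG : ∀ a ∈ G, ∀ b ∈ G, (K : ℤ) ∣ a - b → a = b) (k : ℤ) :
    ∑ kbar ∈ range K, ‖matchedFilter Ω G k kbar‖ ^ 2 = ∑ kdot ∈ G, ‖Ω kdot‖ ^ 2 := by
  have hpair (a b : ℤ) : ∑ kbar ∈ range K,
      conj (Ω a) * Ω (a + k - kbar) * conj (conj (Ω b) * Ω (b + k - kbar)) =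
        conj (Ω a) * Ω b * if (K : ℤ) ∣ a - b then 1 else 0 := by
    rw [← add_sub_add_right_eq_sub a b k, ← horth, mul_sum]
    refine sum_congr rfl fun kbar _ => ?_
    simp only [map_mul, conj_conj]
    ring
  apply ofReal_injective
  push_cast
  simp only [← mul_conj', matchedFilter, map_sum, sum_mul_sum]
  rw [sum_comm]
  refine sum_congr rfl fun a ha => ?_
  rw [sum_comm, sum_congr rfl fun b _ => hpair a b, sum_eq_single_of_mem a ha fun b hb hba => by
      rw [if_neg (mt (hG a ha b hb) hba.symm), mul_zero],
    sub_self, if_pos (dvd_zero _), mul_one, mul_comm]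

theorem sum_punctured_norm_sq_matchedFilter (hK : 0 < K)
    (hper : ∀ a b : ℤ, (K : ℤ) ∣ a - b → Ω a = Ω b)
    (horth : ∀ a b : ℤ, ∑ d ∈ range K, Ω (a - d) * conj (Ω (b - d)) =
      if (K : ℤ) ∣ a - b then 1 else 0)
    (hG : ∀ a ∈ G, ∀ b ∈ G, (K : ℤ) ∣ a - b → a = b) (k : ℤ) :
    ∑ kbar ∈ (range K).filter (fun kbar : ℕ => ¬ (K : ℤ) ∣ kbar - k),
        ‖matchedFilter Ω G k kbar‖ ^ 2 =
      (∑ kdot ∈ G, ‖Ω kdot‖ ^ 2) - (∑ kdot ∈ G, ‖Ω kdot‖ ^ 2) ^ 2 := by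
  have hP : 0 ≤ ∑ kdot ∈ G, ‖Ω kdot‖ ^ 2 := by positivity
  have hfull := sum_range_norm_sq_matchedFilter horth hG k
  rw [← sum_filter_add_sum_filter_not _ (fun kbar : ℕ => (K : ℤ) ∣ kbar - k),
    filter_range_dvd_sub_eq_singleton hK, sum_singleton,
    matchedFilter_eq_of_dvd_sub hper (Int.dvd_toNat_emod_sub hK k),
    norm_real, Real.norm_of_nonneg hP] at hfull
  linarith

end matchedFilter

theorem nDFT_eq_normalizedDFT (K : ℕ) (θ : ℕ → ℝ) :
    nDFT K θ = normalizedDFT K (fun n => exp (-I * θ n)) := rfl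

theorem punctured_matched_filter_energy_of_nDFT
    (K : ℕ) (hK : 0 < K) (θ : ℕ → ℝ)
    (Ghat : Finset ℤ) (hGhat : ∀ a ∈ Ghat, ∀ b ∈ Ghat, (K : ℤ) ∣ (a - b) → a = b)
    (k : ℤ) :
    ∑ kbar ∈ (Finset.range K).filter (fun kbar : ℕ => ¬ (K : ℤ) ∣ ((kbar : ℤ) - k)),
        ‖∑ kdot ∈ Ghat,
          (starRingEnd ℂ) (nDFT K θ kdot) * nDFT K θ (kdot + k - kbar)‖ ^ 2 =
      (∑ kdot ∈ Ghat, ‖nDFT K θ kdot‖ ^ 2) -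
        (∑ kdot ∈ Ghat, ‖nDFT K θ kdot‖ ^ 2) ^ 2 := by
  have hunit (n : ℕ) : ‖exp (-I * θ n)‖ = 1 := by simp [norm_exp]
  rw [nDFT_eq_normalizedDFT]
  exact sum_punctured_norm_sq_matchedFilter hK (fun _ _ => normalizedDFT_eq_of_dvd_sub _)
    (sum_range_normalizedDFT_sub_mul_conj_sub_of_norm_eq_one _ hK hunit) hGhat k
end

section
/- Let E_s, Q, R be strictly positive real numbers and define g: ℝ → ℝ by g(x) = x·(E_s − x)/(Q·x + E_s·R). Let x* = E_s·(√(R² + Q·R) − R)/Q. Then 0 < x* < E_s, and x* is the unique maximizer of g on the interval [0, E_s]; that is, g(x) ≤ g(x*) for all x ∈ [0, E_s], with equality only for x = x*. -/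
/-!
With `x₀` the positive root of `Q x² + 2 R E x = R E²` (the stationary-point equation of
`g x = x (E - x) / (Q x + E R)`), the ratio decomposes as
`g x = (E - 2 x₀) / Q - (x - x₀)² / (Q x + E R)`.
The denominator is positive for `x ≥ 0`, so `g ≤ (E - 2 x₀) / Q` there, with equality exactly at
`x₀`; and `0 < x₀ < E` because `R < √(R² + Q R) < R + Q`.
-/

open Real Set

theorem mul_sub_div_eq_sub_sq_div {K : Type*} [Field K] {E Q R x₀ x : K} (hQ : Q ≠ 0)
    (hx : Q * x + E * R ≠ 0) (hx₀ : Q * x₀ ^ 2 + 2 * R * E * x₀ = R * E ^ 2) :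
    x * (E - x) / (Q * x + E * R) = (E - 2 * x₀) / Q - (x - x₀) ^ 2 / (Q * x + E * R) := by
  rw [div_sub_div _ _ hQ hx, div_eq_div_iff hx (mul_ne_zero hQ hx)]
  linear_combination (Q * x + E * R) * hx₀

theorem stationary_point_quadratic (E : ℝ) {Q R : ℝ} (hQ : Q ≠ 0) (hD : 0 ≤ R ^ 2 + Q * R) :
    Q * (E * (√(R ^ 2 + Q * R) - R) / Q) ^ 2 + 2 * R * E * (E * (√(R ^ 2 + Q * R) - R) / Q)
      = R * E ^ 2 := by
  have hsq := Real.sq_sqrt hD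
  generalize √(R ^ 2 + Q * R) = s at hsq ⊢
  field_simp
  linear_combination E ^ 2 * hsq

theorem stationary_point_mem_Ioo {E Q R : ℝ} (hE : 0 < E) (hQ : 0 < Q) (hR : 0 < R) :
    E * (√(R ^ 2 + Q * R) - R) / Q ∈ Ioo 0 E := by
  have hlo : R < √(R ^ 2 + Q * R) := (Real.lt_sqrt hR.le).2 (by nlinarith)
  have hhi : √(R ^ 2 + Q * R) < R + Q := (Real.sqrt_lt' (by positivity)).2 (by nlinarith)
  constructor
  · exact div_pos (mul_pos hE (sub_pos.2 hlo)) hQ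
  · rw [div_lt_iff₀ hQ]
    nlinarith

theorem sub_sq_div_eq_self_iff {c x x₀ d : ℝ} (hd : 0 < d) :
    c - (x - x₀) ^ 2 / d = c ↔ x = x₀ := by
  rw [sub_eq_self, div_eq_zero_iff, or_iff_left hd.ne', sq_eq_zero_iff, sub_eq_zero]

theorem optimal_reference_power_allocation
    (Es Q R : ℝ) (hEs : 0 < Es) (hQ : 0 < Q) (hR : 0 < R)
    (g : ℝ → ℝ) (hg : ∀ x : ℝ, g x = x * (Es - x) / (Q * x + Es * R))
    (xstar : ℝ) (hxstar : xstar = Es * (Real.sqrt (R ^ 2 + Q * R) - R) / Q) :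
    (0 < xstar ∧ xstar < Es) ∧
    (∀ x ∈ Set.Icc (0 : ℝ) Es, g x ≤ g xstar) ∧
    (∀ x ∈ Set.Icc (0 : ℝ) Es, g x = g xstar → x = xstar) := by
  have hmem : xstar ∈ Ioo 0 Es := hxstar ▸ stationary_point_mem_Ioo hEs hQ hR
  have hroot : Q * xstar ^ 2 + 2 * R * Es * xstar = R * Es ^ 2 :=
    hxstar ▸ stationary_point_quadratic Es hQ.ne' (by positivity)
  have hden : ∀ x, 0 ≤ x → 0 < Q * x + Es * R := fun x hx => by positivity
  have hdecomp : ∀ x, 0 ≤ x → g x = (Es - 2 * xstar) / Q - (x - xstar) ^ 2 / (Q * x + Es * R) :=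
    fun x hx => (hg x).trans (mul_sub_div_eq_sub_sq_div hQ.ne' (hden x hx).ne' hroot)
  have hmax : g xstar = (Es - 2 * xstar) / Q := by
    rw [hdecomp xstar hmem.1.le, sub_self, sq, zero_mul, zero_div, sub_zero]
  refine ⟨hmem, fun x hx => ?_, fun x hx hgx => ?_⟩
  · rw [hmax, hdecomp x hx.1]
    exact sub_le_self _ (div_nonneg (sq_nonneg _) (hden x hx.1).le)
  · rwa [hmax, hdecomp x hx.1, sub_sq_div_eq_self_iff (hden x hx.1)] at hgx
end

section
/- Let K = K₁+K₂+1 with K₁, K₂ nonnegative integers, 𝒦 = {−K₁,…,K₂}, let ĝ, g be nonnegative integers with 2ĝ ≤ g, Ĝ = {−ĝ,…,ĝ}, 𝒢 = {−g,…,g}, and fix k ∈ 𝒦\𝒢 such that the elements of Ĝ ∪ (k+Ĝ) are pairwise distinct modulo K. Let Δ: ℤ → ℝ be a K-periodic function with Δ[j] ≥ 0 for all j and ∑_{j=0}^{K−1} Δ[j] = 1. Let M ≥ 0, N₀ ≥ 0, E^r ≥ 0, E^d ≥ 0, β_max ≥ 0 be reals, and let b_{k̄} for k̄ ∈ 𝒦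 be reals with 0 ≤ b_{k̄} ≤ β_max. Then ∑_{k̇∈Ĝ} M·N₀·( b_0·E^r·Δ[k̇+k] + ∑_{k̄∈𝒦\𝒢} b_{k̄}·E^d·Δ[k+k̇−k̄] ) + ∑_{k̇∈Ĝ} M·b_0·N₀·E^r·Δ[k̇] + M·(2ĝ+1)·N₀² ≤ M·β_max·N₀·( E^r + (2ĝ+1)·E^d ) + M·(2ĝ+1)·N₀². -/
/-!
Every Δ-sum in the bound runs over indices that are pairwise distinct modulo K: the set
Ĝ ∪ (k + Ĝ) by assumption, and {k + k̇ - k̄ : k̄ ∈ 𝒦 \ 𝒢} because 𝒦 is a window of K consecutive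
integers. Since Δ is K-periodic and nonnegative, such a sum is at most the sum of Δ over one
period, which is 1. Bounding every channel gain by β_max then leaves
M β_max N₀ (E^r + |Ĝ| E^d) on the right.
-/

open Finset

theorem Int.eq_of_dvd_sub_of_mem_Icc {lo hi n a b : ℤ} (hn : hi - lo < n)
    (ha : a ∈ Icc lo hi) (hb : b ∈ Icc lo hi) (hab : n ∣ a - b) : a = b := by
  rw [mem_Icc] at ha hb
  have := Int.eq_zero_of_abs_lt_dvd hab (abs_lt.mpr ⟨by omega, by omega⟩)
  omega

theorem Int.disjoint_Icc_image_add {r g k : ℤ} (hrg : 2 * r ≤ g) (hk : k ∉ Icc (-g) g) :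
    Disjoint (Icc (-r) r) ((Icc (-r) r).image (· + k)) := by
  simp only [disjoint_left, mem_image, mem_Icc] at hk ⊢
  rintro _ hx ⟨y, hy, rfl⟩
  omega

theorem Finset.sum_mul_le_of_le_of_sum_le_one {ι R : Type*} [CommSemiring R] [PartialOrder R]
    [IsOrderedRing R] {s : Finset ι} {w a : ι → R} {B : R} (hB : 0 ≤ B)
    (hw : ∀ i ∈ s, w i ≤ B) (ha : ∀ i ∈ s, 0 ≤ a i) (hsum : ∑ i ∈ s, a i ≤ 1) :
    ∑ i ∈ s, w i * a i ≤ B :=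
  calc ∑ i ∈ s, w i * a i ≤ ∑ i ∈ s, B * a i :=
        sum_le_sum fun i hi => mul_le_mul_of_nonneg_right (hw i hi) (ha i hi)
    _ = B * ∑ i ∈ s, a i := (mul_sum ..).symm
    _ ≤ B := mul_le_of_le_one_right hB hsum

namespace Function.Periodic

theorem map_emod {α : Type*} {f : ℤ → α} {c : ℤ} (hf : Periodic f c) (x : ℤ) :
    f (x % c) = f x := by
  rw [Int.emod_def, mul_comm]
  exact hf.sub_int_mul_eq _

variable {M : Type*} [AddCommMonoid M] [PartialOrder M] [IsOrderedAddMonoid M]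
  {f : ℤ → M} {n : ℕ}

theorem sum_le_sum_range (hf : Periodic f n) (hf0 : ∀ j, 0 ≤ f j) (hn : n ≠ 0)
    {S : Finset ℤ} (hS : ∀ a ∈ S, ∀ b ∈ S, (n : ℤ) ∣ a - b → a = b) :
    ∑ s ∈ S, f s ≤ ∑ j ∈ range n, f j := by
  have hres : ∀ s : ℤ, (((s % (n : ℤ)).toNat : ℕ) : ℤ) = s % n := fun s =>
    Int.toNat_of_nonneg (Int.emod_nonneg s (by omega))
  calc ∑ s ∈ S, f s = ∑ s ∈ S, f ((s % (n : ℤ)).toNat : ℕ) := by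
        simp only [hres, hf.map_emod]
    _ = ∑ j ∈ S.image (fun s : ℤ => (s % (n : ℤ)).toNat), f (j : ℕ) := by
        rw [sum_image]
        intro a ha b hb hab
        have hmod : a % n = b % n := by
          rw [← hres a, ← hres b]; exact congrArg _ hab
        exact hS a ha b hb (Int.ModEq.dvd hmod.symm)
    _ ≤ ∑ j ∈ range n, f j := by
        refine sum_le_sum_of_subset_of_nonneg (fun j hj => ?_) fun j _ _ => hf0 j
        obtain ⟨s, -, rfl⟩ := mem_image.mp hj
        have := Int.emod_lt_of_pos s (by omega : (0 : ℤ) < n)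
        simp only [mem_range]; omega

theorem sum_add_shift_le_sum_range (hf : Periodic f n) (hf0 : ∀ j, 0 ≤ f j) (hn : n ≠ 0)
    {S : Finset ℤ} {k : ℤ} (hdisj : Disjoint S (S.image (· + k)))
    (hS : ∀ a ∈ S ∪ S.image (· + k), ∀ b ∈ S ∪ S.image (· + k), (n : ℤ) ∣ a - b → a = b) :
    ∑ s ∈ S, (f (s + k) + f s) ≤ ∑ j ∈ range n, f j := by
  rw [sum_add_distrib, add_comm, ← sum_image (add_left_injective k).injOn, ← sum_union hdisj]
  exact hf.sum_le_sum_range hf0 hn hS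

theorem sum_const_sub_le_sum_range (hf : Periodic f n) (hf0 : ∀ j, 0 ≤ f j)
    {T : Finset ℤ} {lo hi : ℤ} (hT : T ⊆ Icc lo hi) (hn : hi - lo < n) (c : ℤ) :
    ∑ t ∈ T, f (c - t) ≤ ∑ j ∈ range n, f j := by
  rcases eq_or_ne n 0 with rfl | hn0
  · rw [subset_empty.mp (hT.trans (Icc_eq_empty (by omega)).le)]; simp
  rw [← sum_image sub_right_injective.injOn]
  refine hf.sum_le_sum_range hf0 hn0 ?_
  simp only [mem_image]
  rintro _ ⟨a, ha, rfl⟩ _ ⟨b, hb, rfl⟩ h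
  rw [sub_sub_sub_cancel_left] at h
  exact congrArg _ (Int.eq_of_dvd_sub_of_mem_Icc hn (hT hb) (hT ha) h).symm

end Function.Periodic

theorem noise_power_bound
    (K₁ K₂ K : ℕ) (hK : K = K₁ + K₂ + 1)
    (ghat g : ℕ) (hgg : 2 * ghat ≤ g)
    (Kset Gset Ghat : Finset ℤ)
    (hKset : Kset = Finset.Icc (-(K₁ : ℤ)) (K₂ : ℤ))
    (hGset : Gset = Finset.Icc (-(g : ℤ)) (g : ℤ))
    (hGhat : Ghat = Finset.Icc (-(ghat : ℤ)) (ghat : ℤ))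
    (k : ℤ) (hk : k ∈ Kset \ Gset)
    (hdist : ∀ a ∈ Ghat ∪ Ghat.image (· + k), ∀ b ∈ Ghat ∪ Ghat.image (· + k),
      (K : ℤ) ∣ (a - b) → a = b)
    (Δ : ℤ → ℝ) (hΔper : ∀ j : ℤ, Δ (j + K) = Δ j) (hΔpos : ∀ j : ℤ, 0 ≤ Δ j)
    (hΔsum : ∑ j ∈ Finset.range K, Δ (j : ℤ) = 1)
    (M N₀ Er Ed βmax : ℝ)
    (hM : 0 ≤ M) (hN₀ : 0 ≤ N₀) (hEr : 0 ≤ Er) (hEd : 0 ≤ Ed) (hβmax : 0 ≤ βmax)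
    (b : ℤ → ℝ) (hb : ∀ kbar ∈ Kset, 0 ≤ b kbar ∧ b kbar ≤ βmax) :
    (∑ kdot ∈ Ghat, M * N₀ *
        (b 0 * Er * Δ (kdot + k) + ∑ kbar ∈ Kset \ Gset, b kbar * Ed * Δ (k + kdot - kbar)))
      + (∑ kdot ∈ Ghat, M * b 0 * N₀ * Er * Δ kdot)
      + M * (2 * ghat + 1) * N₀ ^ 2 ≤
    M * βmax * N₀ * (Er + (2 * ghat + 1) * Ed) + M * (2 * ghat + 1) * N₀ ^ 2 := by
  have hper : Function.Periodic Δ K := hΔper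
  have hpair : ∑ kdot ∈ Ghat, (Δ (kdot + k) + Δ kdot) ≤ 1 := by
    rw [hGset, mem_sdiff] at hk
    subst hGhat
    exact hΔsum ▸ hper.sum_add_shift_le_sum_range hΔpos (by omega)
      (Int.disjoint_Icc_image_add (by omega) hk.2) hdist
  have hweighted (kdot : ℤ) :
      ∑ kbar ∈ Kset \ Gset, b kbar * Ed * Δ (k + kdot - kbar) ≤ βmax * Ed :=
    sum_mul_le_of_le_of_sum_le_one (by positivity)
      (fun kbar hkbar => by gcongr; exact (hb kbar (mem_sdiff.mp hkbar).1).2)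
      (fun _ _ => hΔpos _)
      (hΔsum ▸ hper.sum_const_sub_le_sum_range hΔpos (sdiff_subset.trans hKset.le) (by omega) _)
  have hb0 : b 0 ≤ βmax := (hb 0 (by rw [hKset, mem_Icc]; omega)).2
  have hcard : (#Ghat : ℝ) = 2 * ghat + 1 := by
    rw [hGhat, Int.card_Icc, show ((ghat : ℤ) + 1 - -ghat).toNat = 2 * ghat + 1 by omega]
    push_cast; ring
  calc _ ≤ ∑ kdot ∈ Ghat, M * N₀ * (βmax * Er * Δ (kdot + k) + βmax * Ed)
        + ∑ kdot ∈ Ghat, M * βmax * N₀ * Er * Δ kdot + M * (2 * ghat + 1) * N₀ ^ 2 := by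
        gcongr with kdot
        · exact hΔpos _
        · exact hweighted kdot
        · exact hΔpos _
    _ = M * βmax * N₀ * (Er * ∑ kdot ∈ Ghat, (Δ (kdot + k) + Δ kdot) + #Ghat * Ed)
        + M * (2 * ghat + 1) * N₀ ^ 2 := by
        simp only [sum_add_distrib, ← mul_sum, sum_const, nsmul_eq_mul]; ring
    _ ≤ _ := by
        rw [hcard]; gcongr; exact mul_le_of_le_one_right hEr hpair
end
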